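/- Let A = (E, {M_k}_{k∈O}) be a quantum algorithm on a d-dimensional space, and let ε ≥ 0, δ ≥ 0, and 0 ≤ η ≤ 1. Then A is (ε,δ)-differentially private within η if and only if for every subset S ⊆ O, δ ≥ η·λ_max(M_S) − (e^ε + η − 1)·λ_min(M_S), where M_S = ∑_{k∈S} E†(M_k). -/

import Mathlib

open Matrix BigOperators
open scoped ComplexOrder

namespace QDP

variable {n : Type*} [Fintype n] [DecidableEq n]

/-- Trace distance `D(ρ,σ) = (1/2) tr |ρ - σ|`, where `|A| = sqrt (Aᴴ A)`. -/
noncomputable def traceDist (ρ σ : Matrix n n ℂ) : ℝ :=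
  (1 / 2 : ℝ) * ((((Matrix.posSemidef_conjTranspose_mul_self (ρ - σ)).1.eigenvectorUnitary : Matrix n n ℂ) * diagonal (((↑) : ℝ → ℂ) ∘ (√·) ∘ (Matrix.posSemidef_conjTranspose_mul_self (ρ - σ)).1.eigenvalues) * (star (Matrix.posSemidef_conjTranspose_mul_self (ρ - σ)).1.eigenvectorUnitary : Matrix n n ℂ)).trace).re

/-- A density matrix: positive semidefinite with trace one. -/
def IsDensity (ρ : Matrix n n ℂ) : Prop := ρ.PosSemidef ∧ ρ.trace = 1

/-- The largest eigenvalue of a (Hermitian) matrix. -/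
noncomputable def lamMax (M : Matrix n n ℂ) : ℝ :=
  if h : M.IsHermitian then ⨆ i, h.eigenvalues i else 0

/-- The smallest eigenvalue of a (Hermitian) matrix. -/
noncomputable def lamMin (M : Matrix n n ℂ) : ℝ :=
  if h : M.IsHermitian then ⨅ i, h.eigenvalues i else 0

/-- Application of a quantum channel given by Kraus matrices. -/
noncomputable def applyChan {ι : Type*} [Fintype ι] (E : ι → Matrix n n ℂ)
    (ρ : Matrix n n ℂ) : Matrix n n ℂ := ∑ j, E j * ρ * (E j)ᴴ

/-- The dual of a quantum channel given by Kraus matrices. -/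
noncomputable def dualChan {ι : Type*} [Fintype ι] (E : ι → Matrix n n ℂ)
    (M : Matrix n n ℂ) : Matrix n n ℂ := ∑ j, (E j)ᴴ * M * E j

/-- `(ε,δ)`-differential privacy within `η` of the quantum algorithm `(E, M)`. -/
def IsDP {ι : Type*} [Fintype ι] {O : Type*} [Fintype O]
    (E : ι → Matrix n n ℂ) (M : O → Matrix n n ℂ) (ε δ η : ℝ) : Prop :=
  ∀ ρ σ : Matrix n n ℂ, IsDensity ρ → IsDensity σ → traceDist ρ σ ≤ η →
    ∀ S : Finset O,
      (∑ k ∈ S, (M k * applyChan E ρ).trace).re ≤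
        Real.exp ε * (∑ k ∈ S, (M k * applyChan E σ).trace).re + δ

/-- Rank-one projection `|ψ⟩⟨ψ|`. -/
noncomputable def proj (ψ : n → ℂ) : Matrix n n ℂ := vecMulVec ψ (star ψ)

end QDP

/-!
Write `H = M_S`, so that `∑_{k ∈ S} tr (M_k E(ρ)) = tr (H ρ)` and `λ_min ≤ H ≤ λ_max` in the
Loewner order. Splitting `ρ - σ = (ρ - σ)⁺ - (ρ - σ)⁻` into positive parts, both of trace
`D(ρ, σ)`, gives `tr (H ρ) - tr (H σ) ≤ (λ_max - λ_min) D(ρ, σ)`; together with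
`λ_min ≤ tr (H σ)` and `e^ε ≥ 1` this yields sufficiency. Conversely, for unit eigenvectors
`u`, `v` of `λ_max`, `λ_min`, the states `ρ = η |u⟩⟨u| + (1 - η) |v⟩⟨v|` and `σ = |v⟩⟨v|` are at
trace distance at most `η` and make the privacy inequality read exactly
`η λ_max - (e^ε + η - 1) λ_min ≤ δ`.
-/

open scoped MatrixOrder

namespace Matrix

variable {n 𝕜 : Type*} [Fintype n] [DecidableEq n] [RCLike 𝕜]

theorem trace_mul_le_trace_mul {A B X : Matrix n n 𝕜} (hAB : A ≤ B) (hX : 0 ≤ X) :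
    (A * X).trace ≤ (B * X).trace := by
  obtain ⟨s, hs, rfl⟩ : ∃ s : Matrix n n 𝕜, IsSelfAdjoint s ∧ X = s * s :=
    ⟨CFC.sqrt X, (CFC.sqrt_nonneg X).isSelfAdjoint, (CFC.sqrt_mul_sqrt_self X hX).symm⟩
  rw [← Matrix.mul_assoc, ← Matrix.mul_assoc, trace_mul_cycle A, trace_mul_cycle B]
  exact (tracePositiveLinearMap n 𝕜 𝕜).mono (hs.conjugate_le_conjugate hAB)

end Matrix

namespace QDP

variable {n : Type*} [Fintype n]

section Channel

variable {ι : Type*} [Fintype ι] (E : ι → Matrix n n ℂ)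

theorem trace_mul_applyChan (M ρ : Matrix n n ℂ) :
    (M * applyChan E ρ).trace = (dualChan E M * ρ).trace := by
  simp only [applyChan, dualChan, Matrix.mul_sum, Matrix.sum_mul, trace_sum, ← Matrix.mul_assoc]
  refine Finset.sum_congr rfl fun j _ => ?_
  rw [trace_mul_cycle, ← Matrix.mul_assoc (E j)ᴴ]

theorem isHermitian_dualChan {M : Matrix n n ℂ} (hM : M.IsHermitian) :
    (dualChan E M).IsHermitian :=
  isSelfAdjoint_sum _ fun j _ => isHermitian_conjTranspose_mul_mul (E j) hM

end Channel

section Proj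

theorem convex_isDensity : Convex ℝ {ρ : Matrix n n ℂ | IsDensity ρ} := by
  rintro ρ ⟨hρ, hρ1⟩ σ ⟨hσ, hσ1⟩ a b ha hb hab
  refine ⟨(hρ.smul ha).add (hσ.smul hb), ?_⟩
  rw [trace_add, trace_smul, trace_smul, hρ1, hσ1, ← add_smul, hab, one_smul]

theorem trace_proj (ψ : n → ℂ) : (proj ψ).trace = star ψ ⬝ᵥ ψ := by
  rw [proj, trace_vecMulVec, dotProduct_comm]

theorem isDensity_proj {ψ : n → ℂ} (hψ : star ψ ⬝ᵥ ψ = 1) : IsDensity (proj ψ) :=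
  ⟨posSemidef_vecMulVec_self_star ψ, (trace_proj ψ).trans hψ⟩

theorem proj_mul_proj_eq_zero {u v : n → ℂ} (huv : star u ⬝ᵥ v = 0) : proj u * proj v = 0 := by
  rw [proj, proj, vecMulVec_mul_vecMulVec, huv, zero_smul, vecMulVec_zero]

theorem trace_mul_proj (H : Matrix n n ℂ) (ψ : n → ℂ) :
    (H * proj ψ).trace = star ψ ⬝ᵥ (H *ᵥ ψ) := by
  rw [proj, mul_vecMulVec, trace_vecMulVec, dotProduct_comm]

end Proj

variable [DecidableEq n]

section Spectrum

variable {H : Matrix n n ℂ}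

theorem eigenvalues_le_lamMax (hH : H.IsHermitian) (i : n) : hH.eigenvalues i ≤ lamMax H := by
  rw [lamMax, dif_pos hH]
  exact le_ciSup (Set.finite_range _).bddAbove i

theorem lamMin_le_eigenvalues (hH : H.IsHermitian) (i : n) : lamMin H ≤ hH.eigenvalues i := by
  rw [lamMin, dif_pos hH]
  exact ciInf_le (Set.finite_range _).bddBelow i

theorem exists_eigenvalues_eq_lamMax [Nonempty n] (hH : H.IsHermitian) :
    ∃ i, hH.eigenvalues i = lamMax H := by
  obtain ⟨i, hi⟩ := Finite.exists_max hH.eigenvalues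
  refine ⟨i, (eigenvalues_le_lamMax hH i).antisymm ?_⟩
  rw [lamMax, dif_pos hH]
  exact ciSup_le hi

theorem exists_eigenvalues_eq_lamMin [Nonempty n] (hH : H.IsHermitian) :
    ∃ i, hH.eigenvalues i = lamMin H := by
  obtain ⟨i, hi⟩ := Finite.exists_min hH.eigenvalues
  refine ⟨i, le_antisymm ?_ (lamMin_le_eigenvalues hH i)⟩
  rw [lamMin, dif_pos hH]
  exact le_ciInf hi

theorem lamMin_le_lamMax [Nonempty n] (hH : H.IsHermitian) : lamMin H ≤ lamMax H := by
  obtain ⟨i, hi⟩ := exists_eigenvalues_eq_lamMax hH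
  exact hi ▸ lamMin_le_eigenvalues hH i

theorem algebraMap_lamMin_le (hH : H.IsHermitian) : algebraMap ℝ _ (lamMin H) ≤ H := by
  rw [algebraMap_le_iff_le_spectrum hH, hH.spectrum_real_eq_range_eigenvalues]
  rintro _ ⟨i, rfl⟩
  exact lamMin_le_eigenvalues hH i

theorem le_algebraMap_lamMax (hH : H.IsHermitian) : H ≤ algebraMap ℝ _ (lamMax H) := by
  rw [le_algebraMap_iff_spectrum_le hH, hH.spectrum_real_eq_range_eigenvalues]
  rintro _ ⟨i, rfl⟩
  exact eigenvalues_le_lamMax hH i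

theorem lamMin_mul_re_trace_le (hH : H.IsHermitian) {X : Matrix n n ℂ} (hX : X.PosSemidef) :
    lamMin H * X.trace.re ≤ (H * X).trace.re := by
  have := trace_mul_le_trace_mul (algebraMap_lamMin_le hH) hX.nonneg
  simpa [Algebra.algebraMap_eq_smul_one] using (Complex.le_def.mp this).1

theorem re_trace_mul_le_lamMax_mul (hH : H.IsHermitian) {X : Matrix n n ℂ} (hX : X.PosSemidef) :
    (H * X).trace.re ≤ lamMax H * X.trace.re := by
  have := trace_mul_le_trace_mul (le_algebraMap_lamMax hH) hX.nonneg
  simpa [Algebra.algebraMap_eq_smul_one] using (Complex.le_def.mp this).1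

theorem re_trace_mul_le_of_isSelfAdjoint (hH : H.IsHermitian) {A : Matrix n n ℂ}
    (hA : IsSelfAdjoint A) :
    (H * A).trace.re ≤ lamMax H * (A⁺).trace.re - lamMin H * (A⁻).trace.re := by
  conv_lhs => rw [← CFC.posPart_sub_negPart A hA, Matrix.mul_sub, trace_sub, Complex.sub_re]
  have := re_trace_mul_le_lamMax_mul hH (CFC.posPart_nonneg A).posSemidef
  have := lamMin_mul_re_trace_le hH (CFC.negPart_nonneg A).posSemidef
  linarith

theorem star_eigenvectorBasis_dotProduct (hH : H.IsHermitian) (i j : n) :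
    star ⇑(hH.eigenvectorBasis i) ⬝ᵥ ⇑(hH.eigenvectorBasis j) = if i = j then 1 else 0 := by
  rw [dotProduct_comm, ← EuclideanSpace.inner_eq_star_dotProduct,
    orthonormal_iff_ite.mp hH.eigenvectorBasis.orthonormal]

theorem trace_mul_proj_eigenvectorBasis (hH : H.IsHermitian) (i : n) :
    (H * proj ⇑(hH.eigenvectorBasis i)).trace = hH.eigenvalues i := by
  rw [trace_mul_proj, hH.mulVec_eigenvectorBasis, dotProduct_smul,
    star_eigenvectorBasis_dotProduct, if_pos rfl, Complex.real_smul, mul_one]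

end Spectrum

section TraceDistance

theorem traceDist_eq_re_trace_abs (ρ σ : Matrix n n ℂ) :
    traceDist ρ σ = 1 / 2 * (CFC.abs (ρ - σ)).trace.re := by
  have hA := (posSemidef_conjTranspose_mul_self (ρ - σ)).1
  rw [traceDist, CFC.abs, CFC.sqrt_eq_real_sqrt _ (star_mul_self_nonneg _), cfcₙ_eq_cfc]
  change _ = 1 / 2 * (cfc Real.sqrt ((ρ - σ)ᴴ * (ρ - σ))).trace.re
  rw [hA.cfc_eq]
  rfl

theorem traceDist_self (ρ : Matrix n n ℂ) : traceDist ρ ρ = 0 := by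
  simp [traceDist_eq_re_trace_abs]

variable {ρ σ : Matrix n n ℂ}

theorem re_trace_posPart_eq_re_trace_negPart (hρ : IsDensity ρ) (hσ : IsDensity σ) :
    ((ρ - σ)⁺).trace.re = ((ρ - σ)⁻).trace.re := by
  have h := congrArg (fun A => A.trace.re) (CFC.posPart_sub_negPart (ρ - σ) (hρ.1.1.sub hσ.1.1))
  simp only [trace_sub, hρ.2, hσ.2, sub_self, Complex.sub_re, Complex.zero_re] at h
  exact sub_eq_zero.mp h

theorem traceDist_eq_re_trace_posPart (hρ : IsDensity ρ) (hσ : IsDensity σ) :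
    traceDist ρ σ = ((ρ - σ)⁺).trace.re := by
  rw [traceDist_eq_re_trace_abs, ← CFC.posPart_add_negPart _ (hρ.1.1.sub hσ.1.1), trace_add,
    Complex.add_re, ← re_trace_posPart_eq_re_trace_negPart hρ hσ]
  ring

theorem re_trace_mul_sub_le {H : Matrix n n ℂ} (hH : H.IsHermitian) (hρ : IsDensity ρ)
    (hσ : IsDensity σ) :
    (H * ρ).trace.re - (H * σ).trace.re ≤ (lamMax H - lamMin H) * traceDist ρ σ := by
  have := re_trace_mul_le_of_isSelfAdjoint hH (hρ.1.1.sub hσ.1.1)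
  rw [Matrix.mul_sub, trace_sub, Complex.sub_re, ← re_trace_posPart_eq_re_trace_negPart hρ hσ] at this
  rw [traceDist_eq_re_trace_posPart hρ hσ]
  linarith

theorem traceDist_smul_proj_add_smul_proj {u v : n → ℂ} (hu : star u ⬝ᵥ u = 1) (hv : star v ⬝ᵥ v = 1)
    (huv : star u ⬝ᵥ v = 0) {t : ℝ} (ht0 : 0 ≤ t) (ht1 : t ≤ 1) :
    traceDist (t • proj u + (1 - t) • proj v) (proj v) = t := by
  have hρ : IsDensity (t • proj u + (1 - t) • proj v) :=
    convex_isDensity (isDensity_proj hu) (isDensity_proj hv) ht0 (sub_nonneg.2 ht1) (by ring)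
  have hsplit : t • proj u + (1 - t) • proj v - proj v = t • proj u - t • proj v := by
    module
  have hpos := (CFC.posPart_negPart_unique hsplit
    (by rw [smul_mul_smul, proj_mul_proj_eq_zero huv, smul_zero])
    ((posSemidef_vecMulVec_self_star u).smul ht0).nonneg
    ((posSemidef_vecMulVec_self_star v).smul ht0).nonneg).1
  rw [traceDist_eq_re_trace_posPart hρ (isDensity_proj hv), hpos, trace_smul, trace_proj, hu]
  simp

theorem exists_isDensity_re_trace_mul_eq [Nonempty n] {H : Matrix n n ℂ} (hH : H.IsHermitian)
    {t : ℝ} (ht0 : 0 ≤ t) (ht1 : t ≤ 1) :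
    ∃ ρ σ, IsDensity ρ ∧ IsDensity σ ∧ traceDist ρ σ ≤ t ∧
      (H * ρ).trace.re = t * lamMax H + (1 - t) * lamMin H ∧ (H * σ).trace.re = lamMin H := by
  obtain ⟨i, hi⟩ := exists_eigenvalues_eq_lamMax hH
  obtain ⟨j, hj⟩ := exists_eigenvalues_eq_lamMin hH
  set u := ⇑(hH.eigenvectorBasis i)
  set v := ⇑(hH.eigenvectorBasis j)
  have hu : star u ⬝ᵥ u = 1 := by simp [u, star_eigenvectorBasis_dotProduct]
  have hv : star v ⬝ᵥ v = 1 := by simp [v, star_eigenvectorBasis_dotProduct]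
  refine ⟨t • proj u + (1 - t) • proj v, proj v,
    convex_isDensity (isDensity_proj hu) (isDensity_proj hv) ht0 (sub_nonneg.2 ht1) (by ring),
    isDensity_proj hv, ?_, ?_, ?_⟩
  · rcases eq_or_ne i j with rfl | hij
    · rw [← add_smul, add_sub_cancel, one_smul, traceDist_self]
      exact ht0
    · refine (traceDist_smul_proj_add_smul_proj hu hv ?_ ht0 ht1).le
      simp [u, v, star_eigenvectorBasis_dotProduct, hij]
  · rw [Matrix.mul_add, Matrix.mul_smul, Matrix.mul_smul, trace_add, trace_smul, trace_smul,
      trace_mul_proj_eigenvectorBasis, trace_mul_proj_eigenvectorBasis, hi, hj]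
    simp
  · rw [trace_mul_proj_eigenvectorBasis, hj, Complex.ofReal_re]

end TraceDistance

end QDP

open QDP in
theorem dp_iff_delta_bound_general {d : ℕ} (hd : 1 ≤ d) {ι O : Type} [Fintype ι] [Fintype O]
    (E : ι → Matrix (Fin d) (Fin d) ℂ)
    (M : O → Matrix (Fin d) (Fin d) ℂ) (hMpos : ∀ k, (M k).PosSemidef)
    (ε δ η : ℝ) (hε : 0 ≤ ε) (hη0 : 0 ≤ η) (hη1 : η ≤ 1) :
    IsDP E M ε δ η ↔
      ∀ S : Finset O,
        η * lamMax (∑ k ∈ S, dualChan E (M k)) -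
            (Real.exp ε + η - 1) * lamMin (∑ k ∈ S, dualChan E (M k)) ≤ δ := by
  have : Nonempty (Fin d) := ⟨⟨0, hd⟩⟩
  have hH (S : Finset O) : (∑ k ∈ S, dualChan E (M k)).IsHermitian :=
    isSelfAdjoint_sum _ fun k _ => isHermitian_dualChan E (hMpos k).1
  simp only [IsDP, ← trace_sum, trace_mul_applyChan, ← Matrix.sum_mul]
  constructor
  · intro hDP S
    obtain ⟨ρ, σ, hρ, hσ, hdist, hρH, hσH⟩ := exists_isDensity_re_trace_mul_eq (hH S) hη0 hη1
    have := hDP ρ σ hρ hσ hdist S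
    rw [hρH, hσH] at this
    linarith
  · intro hδ ρ σ hρ hσ hdist S
    have hspread := re_trace_mul_sub_le (hH S) hρ hσ
    have hσH := lamMin_mul_re_trace_le (hH S) hσ.1
    rw [hσ.2, Complex.one_re, mul_one] at hσH
    have := mul_le_mul_of_nonneg_left hdist (sub_nonneg.2 (lamMin_le_lamMax (hH S)))
    have := mul_le_mul_of_nonneg_left hσH (sub_nonneg.2 (Real.one_le_exp hε))
    linarith [hδ S]

open QDP in
/-- Theorem (sufficient and necessary condition for `(ε,δ)`-differential privacy). -/
theorem dp_iff_delta_bound {d : ℕ} (hd : 1 ≤ d) {ι O : Type} [Fintype ι] [Fintype O]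
    (E : ι → Matrix (Fin d) (Fin d) ℂ) (hE : ∑ j, (E j)ᴴ * E j = 1)
    (M : O → Matrix (Fin d) (Fin d) ℂ) (hMpos : ∀ k, (M k).PosSemidef)
    (hMsum : ∑ k, M k = 1)
    (ε δ η : ℝ) (hε : 0 ≤ ε) (hδ : 0 ≤ δ) (hη0 : 0 ≤ η) (hη1 : η ≤ 1) :
    IsDP E M ε δ η ↔
      ∀ S : Finset O,
        η * lamMax (∑ k ∈ S, dualChan E (M k)) -
            (Real.exp ε + η - 1) * lamMin (∑ k ∈ S, dualChan E (M k)) ≤ δ :=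
  dp_iff_delta_bound_general hd E M hMpos ε δ η hε hη0 hη1
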